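/- Let x_{c,i} ∈ ℝ^m for c = 1, …, C and i = 1, …, k, and set n = kC, class means μ_c = (1/k)∑_i x_{c,i}, and overall mean μ = (1/n)∑_{c,i} x_{c,i}. Define weights W_{(c_1,i),(c_2,j)} = 1/n − 1/k if c_1 = c_2 and W_{(c_1,i),(c_2,j)} = 1/n if c_1 ≠ c_2. Then ∑_{c=1}^C k·(μ_c − μ)(μ_c − μ)ᵀ = (1/2)·∑_{c_1,i} ∑_{c_2,j} W_{(c_1,i),(c_2,j)}·(x_{c_1,i} − x_{c_2,j})(x_{c_1,i} − x_{c_2,j})ᵀ. -/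

import Mathlib

/-!
The between-class scatter is the total scatter about the overall mean minus the within-class
scatters, by the König–Huygens decomposition
`∑ᵢ (yᵢ - a)(yᵢ - a)ᵀ = ∑ᵢ (yᵢ - ȳ)(yᵢ - ȳ)ᵀ + N (ȳ - a)(ȳ - a)ᵀ`
applied to each class with `a` the overall mean. Taking `a = y_q` and summing over `q` turns the
scatter of `N` points into `1 / (2N)` times the sum of all pairwise outer products; with `N = n`
for the total and `N = k` for each class this produces the weights `1/n` and `1/n - 1/k`.
-/

open Matrix Finset

section

variable (R : Type*) {E F ι : Type*} [Field R] [CharZero R] [AddCommGroup E] [Module R E]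
  [AddCommGroup F] [Module R F] [Fintype ι]

noncomputable def sampleMean (y : ι → E) : E := (Fintype.card ι : R)⁻¹ • ∑ p, y p

variable {R}

theorem sum_sub_sampleMean (y : ι → E) : ∑ p, (y p - sampleMean R y) = 0 := by
  rcases isEmpty_or_nonempty ι with hι | hι
  · simp
  · have hcard : (Fintype.card ι : R) ≠ 0 := Nat.cast_ne_zero.mpr Fintype.card_ne_zero
    rw [sum_sub_distrib, sum_const, card_univ, ← Nat.cast_smul_eq_nsmul R, sampleMean,
      smul_inv_smul₀ hcard, sub_self]

variable (B : E →ₗ[R] E →ₗ[R] F)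

theorem sum_bilin_sub_sub_eq_add (y : ι → E) (a : E) :
    ∑ p, B (y p - a) (y p - a) = ∑ p, B (y p - sampleMean R y) (y p - sampleMean R y)
      + (Fintype.card ι : R) • B (sampleMean R y - a) (sampleMean R y - a) := by
  set μ := sampleMean R y
  have hsplit : ∀ p, y p - a = (y p - μ) + (μ - a) := fun p => by abel
  have hcross₁ : ∑ p, B (y p - μ) (μ - a) = 0 := by
    rw [← LinearMap.sum_apply, ← map_sum, sum_sub_sampleMean, map_zero, LinearMap.zero_apply]
  have hcross₂ : ∑ p, B (μ - a) (y p - μ) = 0 := by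
    rw [← map_sum, sum_sub_sampleMean, map_zero]
  simp only [hsplit, map_add, LinearMap.add_apply, sum_add_distrib, hcross₁, hcross₂, sum_const,
    card_univ, Nat.cast_smul_eq_nsmul, add_zero, zero_add]

theorem sum_sum_bilin_sub_sub (y : ι → E) :
    ∑ p, ∑ q, B (y p - y q) (y p - y q)
      = (2 * Fintype.card ι) • ∑ p, B (y p - sampleMean R y) (y p - sampleMean R y) := by
  have hneg : ∀ q, B (sampleMean R y - y q) (sampleMean R y - y q)
      = B (y q - sampleMean R y) (y q - sampleMean R y) := fun q => by
    simp only [← neg_sub (y q), map_neg, LinearMap.neg_apply, neg_neg]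
  rw [sum_comm, sum_congr rfl fun q _ => sum_bilin_sub_sub_eq_add B y (y q)]
  simp only [sum_add_distrib, hneg, ← smul_sum, sum_const, card_univ, Nat.cast_smul_eq_nsmul]
  rw [two_mul, add_smul]

theorem inv_smul_sum_sum_bilin_sub_sub (y : ι → E) :
    (2 * Fintype.card ι : R)⁻¹ • ∑ p, ∑ q, B (y p - y q) (y p - y q)
      = ∑ p, B (y p - sampleMean R y) (y p - sampleMean R y) := by
  rcases isEmpty_or_nonempty ι with hι | hι
  · simp
  · have hcard : (2 * Fintype.card ι : R) ≠ 0 :=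
      mul_ne_zero two_ne_zero (Nat.cast_ne_zero.mpr Fintype.card_ne_zero)
    rw [sum_sum_bilin_sub_sub, ← Nat.cast_smul_eq_nsmul R, Nat.cast_mul, Nat.cast_two,
      inv_smul_smul₀ hcard]

end

theorem sum_sum_sum_sum_ite_sub_smul {R κ ι M : Type*} [Ring R] [Fintype κ] [Fintype ι]
    [DecidableEq κ] [AddCommGroup M] [Module R M] (a b : R) (v : κ → ι → κ → ι → M) :
    ∑ c₁, ∑ i, ∑ c₂, ∑ j, (if c₁ = c₂ then a - b else a) • v c₁ i c₂ j
      = a • ∑ c₁, ∑ i, ∑ c₂, ∑ j, v c₁ i c₂ j - b • ∑ c, ∑ i, ∑ j, v c i c j := by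
  have hweight : ∀ (c₁ c₂ : κ) (w : M), (if c₁ = c₂ then a - b else a) • w
      = a • w - if c₁ = c₂ then b • w else 0 := fun c₁ c₂ w => by
    split_ifs <;> simp only [sub_smul, sub_zero]
  simp only [hweight, smul_sum, sum_sub_distrib, sum_ite_irrel, sum_const_zero, sum_ite_eq,
    mem_univ, if_true]

theorem pairwise_between_scatter_general {m C k : ℕ}
    (x : Fin C → Fin k → (Fin m → ℝ))
    (n : ℕ) (hn : n = k * C)
    (mu : Fin C → (Fin m → ℝ)) (hmu : ∀ c, mu c = (1 / (k : ℝ)) • ∑ i, x c i)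
    (mubar : Fin m → ℝ) (hmubar : mubar = (1 / (n : ℝ)) • ∑ c, ∑ i, x c i)
    (W : Fin C → Fin C → ℝ)
    (hW : ∀ c₁ c₂, W c₁ c₂ = if c₁ = c₂ then 1 / (n : ℝ) - 1 / (k : ℝ) else 1 / (n : ℝ)) :
    ∑ c, (k : ℝ) • vecMulVec (mu c - mubar) (mu c - mubar)
      = (1 / 2 : ℝ) • ∑ c₁, ∑ i, ∑ c₂, ∑ j,
          W c₁ c₂ • vecMulVec (x c₁ i - x c₂ j) (x c₁ i - x c₂ j) := by
  set B : (Fin m → ℝ) →ₗ[ℝ] (Fin m → ℝ) →ₗ[ℝ] Matrix (Fin m) (Fin m) ℝ := vecMulVecBilin ℝ ℝ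
  have hB : ∀ u v, vecMulVec u v = B u v := fun _ _ => rfl
  have hmu' : ∀ c, mu c = sampleMean ℝ (x c) := by simp [hmu, sampleMean]
  have hmubar' : mubar = sampleMean ℝ (fun p : Fin C × Fin k => x p.1 p.2) := by
    simp [hmubar, hn, sampleMean, Fintype.sum_prod_type, mul_comm]
  have htotal : (2 * n : ℝ)⁻¹ • ∑ c₁, ∑ i, ∑ c₂, ∑ j, B (x c₁ i - x c₂ j) (x c₁ i - x c₂ j)
      = ∑ c, ∑ i, B (x c i - mubar) (x c i - mubar) := by
    have h := inv_smul_sum_sum_bilin_sub_sub B (fun p : Fin C × Fin k => x p.1 p.2)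
    rw [← hmubar', Fintype.card_prod, Fintype.card_fin, Fintype.card_fin, mul_comm C k, ← hn] at h
    simpa only [Fintype.sum_prod_type] using h
  have hwithin : (2 * k : ℝ)⁻¹ • ∑ c, ∑ i, ∑ j, B (x c i - x c j) (x c i - x c j)
      = ∑ c, ∑ i, B (x c i - mu c) (x c i - mu c) := by
    rw [smul_sum]
    refine sum_congr rfl fun c _ => ?_
    simpa only [hmu', Fintype.card_fin] using inv_smul_sum_sum_bilin_sub_sub B (x c)
  have hsplit : ∀ c, ∑ i, B (x c i - mubar) (x c i - mubar)
      = ∑ i, B (x c i - mu c) (x c i - mu c) + (k : ℝ) • B (mu c - mubar) (mu c - mubar) :=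
    fun c => by simpa only [hmu', Fintype.card_fin] using sum_bilin_sub_sub_eq_add B (x c) mubar
  simp only [hW, hB]
  rw [sum_sum_sum_sum_ite_sub_smul, smul_sub, smul_smul, smul_smul, one_div_mul_one_div,
    one_div_mul_one_div, one_div, one_div, htotal, hwithin, sum_congr rfl fun c _ => hsplit c,
    sum_add_distrib, add_sub_cancel_left]

/-- Pairwise rewriting of the between-class scatter matrix (LFDA, Appendix E): with `C`
classes of `k` samples each, `n = kC`, class means `μ_c` and overall mean `μ`,
`∑_c k·(μ_c − μ)(μ_c − μ)ᵀ` equals the weighted pairwise sum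
`(1/2)·∑∑ W·(x − x')(x − x')ᵀ` with weight `1/n − 1/k` for same-class pairs and `1/n`
for different-class pairs. -/
theorem pairwise_between_scatter {m C k : ℕ} (hC : 0 < C) (hk : 0 < k)
    (x : Fin C → Fin k → (Fin m → ℝ))
    (n : ℕ) (hn : n = k * C)
    (mu : Fin C → (Fin m → ℝ)) (hmu : ∀ c, mu c = (1 / (k : ℝ)) • ∑ i, x c i)
    (mubar : Fin m → ℝ) (hmubar : mubar = (1 / (n : ℝ)) • ∑ c, ∑ i, x c i)
    (W : Fin C → Fin C → ℝ)
    (hW : ∀ c₁ c₂, W c₁ c₂ = if c₁ = c₂ then 1 / (n : ℝ) - 1 / (k : ℝ) else 1 / (n : ℝ)) :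
    ∑ c, (k : ℝ) • vecMulVec (mu c - mubar) (mu c - mubar)
      = (1 / 2 : ℝ) • ∑ c₁, ∑ i, ∑ c₂, ∑ j,
          W c₁ c₂ • vecMulVec (x c₁ i - x c₂ j) (x c₁ i - x c₂ j) :=
  pairwise_between_scatter_general x n hn mu hmu mubar hmubar W hW
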